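/- With P₀, P₁ as above and P̄_m = P_m − |Ψ⟩⟨Ψ| (m = 0,1), the operators P̄₀ and P̄₁ are projectors and are mutually orthogonal: P̄₀P̄₁ = 0. Consequently, ‖(P̄₀ + P̄₁)/2‖ ≤ 1/2, so the verification operator Ω = (P₀+P₁)/2 satisfies β(Ω) ≤ 1/2, i.e., Ω ≤ (1/2)(|Ψ⟩⟨Ψ| + 1). -/

import Mathlib

open scoped Matrix.Norms.L2Operator ComplexOrder
open Matrix

/-- The tensor product of two vectors. -/
def tensVec {d : ℕ} {ι : Type*} (u : Fin d → ℂ) (v : ι → ℂ) : Fin d × ι → ℂ :=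
  fun p => u p.1 * v p.2

/-!
Both test operators are sums of rank-one projections onto orthonormal families: `aᵢ ⊗ Bᵢ`
(`sᵢ > 0`) for `P₀`, and `ãⱼ ⊗ B̃ⱼ` for `P₁`, the latter because the discrete Fourier transform
is unitary and every `B̃ⱼ` is a unit vector. Since `⟨aᵢ ⊗ Bᵢ, ãⱼ ⊗ B̃ⱼ⟩ = sᵢ / √d` and
`Ψ = ∑ sᵢ aᵢ ⊗ Bᵢ = d^{-1/2} ∑ ⱼ ãⱼ ⊗ B̃ⱼ`, one gets `P₀ P₁ = |Ψ⟩⟨Ψ|`. A self-adjoint product of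
projections forces them to commute, so `P̄ₘ = Pₘ - P₀ P₁` are orthogonal projections, and
`1 - (P₀ + P₁ - P₀ P₁)` is a projection, hence positive, which is the operator inequality.
-/

namespace IsStarProjection

variable {R : Type*} [Ring R] [StarRing R] {p q : R}

theorem sub_mul_of_commute (hp : IsStarProjection p) (hq : IsStarProjection q)
    (hpq : Commute p q) : IsStarProjection (p - p * q) :=
  (hp.mul hq hpq).sub_of_mul_eq_left hp <| by
    rw [mul_assoc, ← hpq.eq, ← mul_assoc, hp.isIdempotentElem.eq]

theorem sub_mul_mul_sub_mul_of_commute (hp : IsStarProjection p) (hq : IsStarProjection q)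
    (hpq : Commute p q) : (p - p * q) * (q - p * q) = 0 := by
  rw [sub_mul, mul_sub, mul_sub, mul_assoc, hq.isIdempotentElem.eq, ← mul_assoc,
    hp.isIdempotentElem.eq, (hp.mul hq hpq).isIdempotentElem.eq, sub_self]

theorem norm_inv_two_smul_le {E : Type*} [NormedRing E] [StarRing E] [CStarRing E]
    [NormedSpace ℂ E] {p : E} (hp : IsStarProjection p) : ‖(2 : ℂ)⁻¹ • p‖ ≤ 1 / 2 := by
  rw [norm_smul, norm_inv, Complex.norm_ofNat]
  linarith [hp.norm_le]

end IsStarProjection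

theorem Matrix.posSemidef_of_isStarProjection {𝕜 n : Type*} [RCLike 𝕜] [Fintype n]
    [DecidableEq n] {A : Matrix n n 𝕜} (hA : IsStarProjection A) : A.PosSemidef := by
  open scoped MatrixOrder in exact nonneg_iff_posSemidef.mp hA.nonneg

section Orthonormal

variable {R : Type*} [CommRing R] [StarRing R] {n κ : Type*} [Fintype n]

theorem star_dotProduct_sum_smul [Fintype κ] [DecidableEq κ] {f : κ → n → R}
    (hf : ∀ i j, star (f i) ⬝ᵥ f j = if i = j then 1 else 0) (e : κ → R) (i : κ) :
    star (f i) ⬝ᵥ ∑ j, e j • f j = e i := by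
  simp [dotProduct_sum, dotProduct_smul, hf]

theorem star_sum_smul_dotProduct_sum_smul [Fintype κ] [DecidableEq κ] {f : κ → n → R}
    (hf : ∀ i j, star (f i) ⬝ᵥ f j = if i = j then 1 else 0) (c e : κ → R) :
    star (∑ i, c i • f i) ⬝ᵥ ∑ j, e j • f j = ∑ i, star (c i) * e i := by
  simp only [star_sum, star_smul, sum_dotProduct, smul_dotProduct, star_dotProduct_sum_smul hf,
    smul_eq_mul]

theorem isStarProjection_sum_vecMulVec [DecidableEq n] [DecidableEq κ] {f : κ → n → R}
    (hf : ∀ i j, star (f i) ⬝ᵥ f j = if i = j then 1 else 0) (S : Finset κ) :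
    IsStarProjection (∑ i ∈ S, vecMulVec (f i) (star (f i))) where
  isIdempotentElem := by
    rw [IsIdempotentElem, Finset.sum_mul_sum]
    refine Finset.sum_congr rfl fun i hi => ?_
    simp only [vecMulVec_mul_vecMulVec, vecMulVec_smul]
    simp only [hf, ite_smul, one_smul, zero_smul, Finset.sum_ite_eq, if_pos hi]
  isSelfAdjoint := by
    simp [IsSelfAdjoint, star_sum, Matrix.star_eq_conjTranspose]

theorem sum_vecMulVec_mul_sum_vecMulVec {κ' : Type*} (S : Finset κ) (T : Finset κ')
    {f : κ → n → R} {g : κ' → n → R} {c : κ → R} {e : κ' → R}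
    (h : ∀ i ∈ S, ∀ j ∈ T, star (f i) ⬝ᵥ g j = c i * star (e j)) :
    (∑ i ∈ S, vecMulVec (f i) (star (f i))) * (∑ j ∈ T, vecMulVec (g j) (star (g j))) =
      vecMulVec (∑ i ∈ S, c i • f i) (star (∑ j ∈ T, e j • g j)) := by
  calc _ = ∑ i ∈ S, ∑ j ∈ T, (c i * star (e j)) • vecMulVec (f i) (star (g j)) := by
        rw [Finset.sum_mul_sum]
        refine Finset.sum_congr rfl fun i hi => Finset.sum_congr rfl fun j hj => ?_
        rw [vecMulVec_mul_vecMulVec, vecMulVec_smul, h i hi j hj]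
    _ = _ := by
        ext x y
        simp [vecMulVec_apply, Matrix.sum_apply, Finset.sum_mul_sum, star_sum, mul_mul_mul_comm]

end Orthonormal

theorem ofReal_sqrt_inv_mul_self_mul_natCast {d : ℕ} (hd : d ≠ 0) :
    ((Real.sqrt d : ℂ))⁻¹ * ((Real.sqrt d : ℂ))⁻¹ * d = 1 := by
  rw [← mul_inv, ← Complex.ofReal_mul, Real.mul_self_sqrt d.cast_nonneg, Complex.ofReal_natCast,
    inv_mul_cancel₀ (Nat.cast_ne_zero.mpr hd)]

section Fourier

variable {d : ℕ} {ω : ℂ}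

theorem IsPrimitiveRoot.star_eq_inv (hω : IsPrimitiveRoot ω d) (hd : d ≠ 0) : star ω = ω⁻¹ :=
  (Complex.inv_eq_conj (hω.norm'_eq_one hd)).symm

theorem IsPrimitiveRoot.pow_mul_star_pow (hω : IsPrimitiveRoot ω d) (hd : d ≠ 0) (m : ℕ) :
    ω ^ m * star ω ^ m = 1 := by
  rw [hω.star_eq_inv hd, inv_pow, mul_inv_cancel₀ (pow_ne_zero _ (hω.ne_zero hd))]

theorem IsPrimitiveRoot.sum_pow_mul_star_pow (hω : IsPrimitiveRoot ω d) (k l : Fin d) :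
    ∑ j : Fin d, ω ^ ((j : ℕ) * (k : ℕ)) * star ω ^ ((j : ℕ) * (l : ℕ)) =
      if k = l then (d : ℂ) else 0 := by
  have hd : d ≠ 0 := k.pos.ne'
  have hω0 : ω ≠ 0 := hω.ne_zero hd
  set ζ := ω ^ (k : ℕ) * (ω ^ (l : ℕ))⁻¹
  have hterm : ∀ j : ℕ, ω ^ (j * k) * star ω ^ (j * l) = ζ ^ j := fun j => by
    rw [hω.star_eq_inv hd]
    ring
  simp only [hterm, Fin.sum_univ_eq_sum_range (ζ ^ ·) d]
  split_ifs with hkl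
  · simp [ζ, hkl, mul_inv_cancel₀ (pow_ne_zero _ hω0)]
  · have hζ : ζ ≠ 1 := fun h =>
      hkl (Fin.ext (hω.pow_inj k.isLt l.isLt ((mul_inv_eq_one₀ (pow_ne_zero _ hω0)).mp h)))
    have hζd : ζ ^ d = 1 := by
      rw [mul_pow, inv_pow, pow_right_comm, pow_right_comm ω (l : ℕ), hω.pow_eq_one, one_pow,
        one_pow, inv_one, mul_one]
    rw [geom_sum_eq hζ, hζd, sub_self, zero_div]

theorem IsPrimitiveRoot.fourier_orthonormal {n : Type*} [Fintype n] (hω : IsPrimitiveRoot ω d)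
    {α : Fin d → n → ℂ}
    (hα : ∀ i j, star (α i) ⬝ᵥ α j = if i = j then 1 else 0) (i j : Fin d) :
    star ((Real.sqrt d : ℂ)⁻¹ • ∑ k : Fin d, ω ^ ((i : ℕ) * (k : ℕ)) • α k) ⬝ᵥ
      ((Real.sqrt d : ℂ)⁻¹ • ∑ k : Fin d, ω ^ ((j : ℕ) * (k : ℕ)) • α k) =
      if i = j then 1 else 0 := by
  have hstar : star ((Real.sqrt d : ℂ)⁻¹) = (Real.sqrt d : ℂ)⁻¹ := by simp
  have hsum : ∑ k : Fin d, star (ω ^ ((i : ℕ) * (k : ℕ))) * ω ^ ((j : ℕ) * (k : ℕ)) =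
      ∑ k : Fin d, ω ^ ((k : ℕ) * (j : ℕ)) * star ω ^ ((k : ℕ) * (i : ℕ)) := by
    simp only [star_pow, mul_comm]
  rw [star_smul, smul_dotProduct, dotProduct_smul, star_sum_smul_dotProduct_sum_smul hα, hsum,
    hω.sum_pow_mul_star_pow, hstar, smul_smul, smul_eq_mul, mul_ite, mul_zero,
    ofReal_sqrt_inv_mul_self_mul_natCast i.pos.ne']
  exact if_congr eq_comm rfl rfl

end Fourier

section TensorProduct

variable {d : ℕ} {ι : Type*}

theorem star_tensVec_dotProduct_tensVec [Fintype ι] (u u' : Fin d → ℂ) (v v' : ι → ℂ) :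
    star (tensVec u v) ⬝ᵥ tensVec u' v' = (star u ⬝ᵥ u') * (star v ⬝ᵥ v') := by
  simp only [dotProduct, Fintype.sum_prod_type, Finset.sum_mul_sum, tensVec, Pi.star_apply,
    star_mul']
  exact Finset.sum_congr rfl fun _ _ => Finset.sum_congr rfl fun _ _ => by ring

theorem tensVec_orthonormal [Fintype ι] {u : Fin d → Fin d → ℂ} {v : Fin d → ι → ℂ}
    (hu : ∀ i j, star (u i) ⬝ᵥ u j = if i = j then 1 else 0)
    (hv : ∀ i, star (v i) ⬝ᵥ v i = 1) (i j : Fin d) :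
    star (tensVec (u i) (v i)) ⬝ᵥ tensVec (u j) (v j) = if i = j then 1 else 0 := by
  rw [star_tensVec_dotProduct_tensVec, hu]
  split_ifs with h
  · rw [h, hv, one_mul]
  · rw [zero_mul]

theorem IsPrimitiveRoot.sum_tensVec_fourier {ω : ℂ} (hω : IsPrimitiveRoot ω d)
    (α : Fin d → Fin d → ℂ) (β : Fin d → ι → ℂ) :
    ∑ j : Fin d, tensVec (∑ k : Fin d, ω ^ ((j : ℕ) * (k : ℕ)) • α k)
        (∑ l : Fin d, star ω ^ ((j : ℕ) * (l : ℕ)) • β l) =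
      (d : ℂ) • ∑ k, tensVec (α k) (β k) := by
  ext p
  simp only [tensVec, Finset.sum_apply, Pi.smul_apply, smul_eq_mul, Finset.sum_mul_sum]
  calc _ = ∑ k : Fin d, ∑ l : Fin d,
        (∑ j : Fin d, ω ^ ((j : ℕ) * (k : ℕ)) * star ω ^ ((j : ℕ) * (l : ℕ))) *
          (α k p.1 * β l p.2) := by
        simp_rw [Finset.sum_mul]
        rw [Finset.sum_comm]
        refine Finset.sum_congr rfl fun k _ => ?_
        rw [Finset.sum_comm]
        exact Finset.sum_congr rfl fun l _ => Finset.sum_congr rfl fun j _ => by ring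
    _ = _ := by
        simp only [hω.sum_pow_mul_star_pow, ite_mul, zero_mul, Finset.sum_ite_eq, Finset.mem_univ,
          if_true, Finset.mul_sum]

end TensorProduct

section SchmidtFourier

variable {d : ℕ} {ι : Type*} [Fintype ι] {s : Fin d → ℝ} {a : Fin d → Fin d → ℂ}
  {B : Fin d → ι → ℂ} {ω : ℂ} {at_ : Fin d → Fin d → ℂ} {Bt : Fin d → ι → ℂ}

theorem twisted_star_dotProduct_self (hω : IsPrimitiveRoot ω d)
    (hBON : ∀ i j, star (B i) ⬝ᵥ B j = if i = j then 1 else 0) (hs1 : ∑ i, s i ^ 2 = 1)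
    (hBt : ∀ i, Bt i = ∑ j : Fin d, (star ω ^ ((i : ℕ) * (j : ℕ)) * s j) • B j) (i : Fin d) :
    star (Bt i) ⬝ᵥ Bt i = 1 := by
  have hterm : ∀ k : Fin d, star (star ω ^ ((i : ℕ) * (k : ℕ)) * s k) *
      (star ω ^ ((i : ℕ) * (k : ℕ)) * s k) = ((s k ^ 2 : ℝ) : ℂ) := fun k => by
    rw [star_mul', star_pow, star_star, show star (s k : ℂ) = s k from Complex.conj_ofReal _]
    push_cast
    linear_combination (s k : ℂ) ^ 2 * hω.pow_mul_star_pow i.pos.ne' ((i : ℕ) * (k : ℕ))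
  rw [hBt, star_sum_smul_dotProduct_sum_smul hBON, Finset.sum_congr rfl fun k _ => hterm k,
    ← Complex.ofReal_sum, hs1, Complex.ofReal_one]

theorem star_tensVec_dotProduct_tensVec_fourier (hω : IsPrimitiveRoot ω d)
    (haON : ∀ i j, star (a i) ⬝ᵥ a j = if i = j then 1 else 0)
    (hBON : ∀ i j, star (B i) ⬝ᵥ B j = if i = j then 1 else 0)
    (hat : ∀ i, at_ i = ((Real.sqrt d : ℂ))⁻¹ • ∑ j : Fin d, ω ^ ((i : ℕ) * (j : ℕ)) • a j)
    (hBt : ∀ i, Bt i = ∑ j : Fin d, (star ω ^ ((i : ℕ) * (j : ℕ)) * s j) • B j) (i j : Fin d) :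
    star (tensVec (a i) (B i)) ⬝ᵥ tensVec (at_ j) (Bt j) = s i * ((Real.sqrt d : ℂ))⁻¹ := by
  rw [star_tensVec_dotProduct_tensVec, hat, hBt, dotProduct_smul, star_dotProduct_sum_smul haON,
    star_dotProduct_sum_smul hBON, smul_eq_mul]
  linear_combination ((Real.sqrt d : ℂ))⁻¹ * s i * hω.pow_mul_star_pow i.pos.ne' ((j : ℕ) * (i : ℕ))

omit [Fintype ι] in
theorem sum_smul_tensVec_fourier (hω : IsPrimitiveRoot ω d)
    (hat : ∀ i, at_ i = ((Real.sqrt d : ℂ))⁻¹ • ∑ j : Fin d, ω ^ ((i : ℕ) * (j : ℕ)) • a j)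
    (hBt : ∀ i, Bt i = ∑ j : Fin d, (star ω ^ ((i : ℕ) * (j : ℕ)) * s j) • B j) :
    ∑ j, ((Real.sqrt d : ℂ))⁻¹ • tensVec (at_ j) (Bt j) = ∑ k, (s k : ℂ) • tensVec (a k) (B k) := by
  rcases eq_or_ne d 0 with rfl | hd
  · simp
  have hsplit : ∀ j, tensVec (at_ j) (Bt j) = ((Real.sqrt d : ℂ))⁻¹ •
      tensVec (∑ k : Fin d, ω ^ ((j : ℕ) * (k : ℕ)) • a k)
        (∑ l : Fin d, star ω ^ ((j : ℕ) * (l : ℕ)) • ((s l : ℂ) • B l)) := fun j => by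
    ext p
    simp [tensVec, hat, hBt, Finset.sum_apply, mul_assoc]
  set c : ℂ := ((Real.sqrt d : ℂ))⁻¹
  calc ∑ j, c • tensVec (at_ j) (Bt j)
      = (c * c) • ∑ j : Fin d, tensVec (∑ k : Fin d, ω ^ ((j : ℕ) * (k : ℕ)) • a k)
          (∑ l : Fin d, star ω ^ ((j : ℕ) * (l : ℕ)) • ((s l : ℂ) • B l)) := by
        simp_rw [hsplit, smul_smul, Finset.smul_sum]
    _ = (c * c * d) • ∑ k, tensVec (a k) ((s k : ℂ) • B k) := by
        rw [hω.sum_tensVec_fourier, smul_smul]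
    _ = _ := by
        rw [ofReal_sqrt_inv_mul_self_mul_natCast hd, one_smul]
        ext p
        simp [tensVec, Finset.sum_apply, mul_left_comm]

theorem sum_vecMulVec_schmidt_mul_sum_vecMulVec_fourier (hω : IsPrimitiveRoot ω d)
    (hs0 : ∀ i, 0 ≤ s i) (haON : ∀ i j, star (a i) ⬝ᵥ a j = if i = j then 1 else 0)
    (hBON : ∀ i j, star (B i) ⬝ᵥ B j = if i = j then 1 else 0)
    (hat : ∀ i, at_ i = ((Real.sqrt d : ℂ))⁻¹ • ∑ j : Fin d, ω ^ ((i : ℕ) * (j : ℕ)) • a j)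
    (hBt : ∀ i, Bt i = ∑ j : Fin d, (star ω ^ ((i : ℕ) * (j : ℕ)) * s j) • B j) :
    (∑ i ∈ Finset.univ.filter (fun i => 0 < s i),
        vecMulVec (tensVec (a i) (B i)) (star (tensVec (a i) (B i)))) *
      (∑ i : Fin d, vecMulVec (tensVec (at_ i) (Bt i)) (star (tensVec (at_ i) (Bt i)))) =
    vecMulVec (∑ k, (s k : ℂ) • tensVec (a k) (B k))
      (star (∑ k, (s k : ℂ) • tensVec (a k) (B k))) := by
  have hc : star ((Real.sqrt d : ℂ))⁻¹ = ((Real.sqrt d : ℂ))⁻¹ := by simp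
  rw [sum_vecMulVec_mul_sum_vecMulVec _ _ (c := fun i => (s i : ℂ))
    (e := fun _ => ((Real.sqrt d : ℂ))⁻¹) fun i _ j _ => by
      rw [star_tensVec_dotProduct_tensVec_fourier hω haON hBON hat hBt, hc],
    sum_smul_tensVec_fourier hω hat hBt, Finset.sum_filter_of_ne]
  intro i _ h
  exact (hs0 i).lt_of_ne fun h0 => h (by simp [← h0])

end SchmidtFourier

theorem IsStarProjection.verification_bounds_of_isSelfAdjoint_mul {n : Type*} [Fintype n]
    [DecidableEq n] {P Q : Matrix n n ℂ} (hP : IsStarProjection P) (hQ : IsStarProjection Q)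
    (hPQ : IsSelfAdjoint (P * Q)) :
    (P - P * Q) * (P - P * Q) = P - P * Q ∧ (P - P * Q).IsHermitian ∧
    (Q - P * Q) * (Q - P * Q) = Q - P * Q ∧ (Q - P * Q).IsHermitian ∧
    (P - P * Q) * (Q - P * Q) = 0 ∧
    ‖(2 : ℂ)⁻¹ • ((P - P * Q) + (Q - P * Q))‖ ≤ 1 / 2 ∧
    ((2 : ℂ)⁻¹ • (P * Q + 1) - (2 : ℂ)⁻¹ • (P + Q)).PosSemidef := by
  have hcomm : Commute P Q :=
    (IsSelfAdjoint.commute_iff hP.isSelfAdjoint hQ.isSelfAdjoint).mpr hPQ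
  have h₀ := hP.sub_mul_of_commute hQ hcomm
  have h₁ : IsStarProjection (Q - P * Q) := hcomm.eq ▸ hQ.sub_mul_of_commute hP hcomm.symm
  have h₀₁ := hP.sub_mul_mul_sub_mul_of_commute hQ hcomm
  refine ⟨h₀.isIdempotentElem, h₀.isSelfAdjoint, h₁.isIdempotentElem, h₁.isSelfAdjoint, h₀₁,
    (h₀.add h₁ h₀₁).norm_inv_two_smul_le, ?_⟩
  -- `P + Q - P * Q` is the projection onto the sum of the two ranges.
  have hsplit : (2 : ℂ)⁻¹ • (P * Q + 1) - (2 : ℂ)⁻¹ • (P + Q) =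
      (2 : ℂ)⁻¹ • (1 - (P + Q - P * Q)) := by
    module
  rw [hsplit]
  exact (posSemidef_of_isStarProjection (hP.add_sub_mul_of_commute hcomm hQ).one_sub).smul
    (by positivity)

/-- Subtracting `|Ψ⟩⟨Ψ|` from the two test projectors of the bipartite SD protocol
yields mutually orthogonal projectors `P̄₀, P̄₁`; hence `‖(P̄₀+P̄₁)/2‖ ≤ 1/2`, so the
verification operator `Ω = (P₀+P₁)/2` satisfies `Ω ≤ (|Ψ⟩⟨Ψ| + 1)/2`. -/
theorem stmt7 (d : ℕ) (hd : 0 < d) {ι : Type*} [Fintype ι] [DecidableEq ι]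
    (s : Fin d → ℝ) (a : Fin d → Fin d → ℂ) (B : Fin d → ι → ℂ)
    (hs0 : ∀ i, 0 ≤ s i) (hs1 : ∑ i, s i ^ 2 = 1)
    (haON : ∀ i j, dotProduct (star (a i)) (a j) = if i = j then 1 else 0)
    (hBON : ∀ i j, dotProduct (star (B i)) (B j) = if i = j then 1 else 0)
    (Ψ : Fin d × ι → ℂ)
    (hΨ : Ψ = fun p => ∑ i : Fin d, (s i : ℂ) * a i p.1 * B i p.2)
    (ω : ℂ) (hω : ω = Complex.exp (2 * Real.pi * Complex.I / d))
    (at_ : Fin d → Fin d → ℂ)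
    (hat : ∀ i, at_ i = ((Real.sqrt d : ℂ))⁻¹ • ∑ j : Fin d, ω ^ ((i : ℕ) * (j : ℕ)) • a j)
    (Bt : Fin d → ι → ℂ)
    (hBt : ∀ i, Bt i = fun y => ∑ j : Fin d, (star ω) ^ ((i : ℕ) * (j : ℕ)) * (s j : ℂ) * B j y)
    (P₀ P₁ : Matrix (Fin d × ι) (Fin d × ι) ℂ)
    (hP₀ : P₀ = ∑ i ∈ Finset.univ.filter (fun i => 0 < s i),
      Matrix.vecMulVec (tensVec (a i) (B i)) (star (tensVec (a i) (B i))))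
    (hP₁ : P₁ = ∑ i : Fin d,
      Matrix.vecMulVec (tensVec (at_ i) (Bt i)) (star (tensVec (at_ i) (Bt i))))
    (Pb₀ Pb₁ : Matrix (Fin d × ι) (Fin d × ι) ℂ)
    (hPb₀ : Pb₀ = P₀ - Matrix.vecMulVec Ψ (star Ψ))
    (hPb₁ : Pb₁ = P₁ - Matrix.vecMulVec Ψ (star Ψ)) :
    Pb₀ * Pb₀ = Pb₀ ∧ Pb₀.IsHermitian ∧ Pb₁ * Pb₁ = Pb₁ ∧ Pb₁.IsHermitian ∧
    Pb₀ * Pb₁ = 0 ∧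
    ‖(2 : ℂ)⁻¹ • (Pb₀ + Pb₁)‖ ≤ 1 / 2 ∧
    ((2 : ℂ)⁻¹ • (Matrix.vecMulVec Ψ (star Ψ) + 1) - (2 : ℂ)⁻¹ • (P₀ + P₁)).PosSemidef := by
  have hω' : IsPrimitiveRoot ω d := hω ▸ Complex.isPrimitiveRoot_exp d hd.ne'
  have hBt' : ∀ i, Bt i = ∑ j : Fin d, (star ω ^ ((i : ℕ) * (j : ℕ)) * s j) • B j := fun i => by
    ext y
    simp [hBt]
  have hΨ' : Ψ = ∑ k, (s k : ℂ) • tensVec (a k) (B k) := by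
    ext p
    simp [hΨ, tensVec, mul_assoc]
  have hP₀proj : IsStarProjection P₀ :=
    hP₀ ▸ isStarProjection_sum_vecMulVec (tensVec_orthonormal haON fun i => by simp [hBON]) _
  have hP₁proj : IsStarProjection P₁ := hP₁ ▸ isStarProjection_sum_vecMulVec
    (tensVec_orthonormal (fun i j => by rw [hat, hat]; exact hω'.fourier_orthonormal haON i j)
      (twisted_star_dotProduct_self hω' hBON hs1 hBt')) _
  have hE : P₀ * P₁ = vecMulVec Ψ (star Ψ) := by
    rw [hP₀, hP₁, hΨ']
    exact sum_vecMulVec_schmidt_mul_sum_vecMulVec_fourier hω' hs0 haON hBON hat hBt'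
  have hEsa : IsSelfAdjoint (P₀ * P₁) := by
    simp [hE, IsSelfAdjoint, Matrix.star_eq_conjTranspose]
  rw [hPb₀, hPb₁, ← hE]
  exact hP₀proj.verification_bounds_of_isSelfAdjoint_mul hP₁proj hEsa
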